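/- arXiv:1610.09188 — 3 statements merged into one kernel-verified Lean document; each statement's English description precedes it below -/
import Mathlib

section
/- Let λ < 1 and suppose the Markov operator A_π^μ satisfies ‖A_π^μ v‖ ≤ λ‖v‖ for all v ∈ E, where supp μ ⊆ S. Then there exists a continuous linear map P : Z¹(G,π) → Z¹(G,π) (with respect to the norm ‖·‖_S) such that P ∘ P = P, the range of P equals B¹(G,π), and P z = z for every z ∈ B¹(G,π). In particular B¹(G,π) is a closed complemented subspace of Z¹(G,π), and Z¹(G,π) is the direct sum of B¹(G,π) and the kernel of P. -/
open MeasureTheory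

/-- `z : G → E` is a (continuous) 1-cocycle for the representation `π`. -/
def IsCocycle {G E : Type*} [Group G] [TopologicalSpace G]
    [NormedAddCommGroup E] [NormedSpace ℝ E]
    (π : G → E →L[ℝ] E) (z : G → E) : Prop :=
  Continuous z ∧ ∀ g h : G, z (g * h) = z g + (π g) (z h)

/-- The coboundary `d_π v : G → E`, `(d_π v)(g) = v − π_g v`. -/
def coboundary {G E : Type*} [NormedAddCommGroup E] [NormedSpace ℝ E]
    (π : G → E →L[ℝ] E) (v : E) : G → E :=
  fun g => v - (π g) v

/-- The norm `‖z‖_S = sup_{s ∈ S} ‖z_s‖`. -/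
noncomputable def normS {G E : Type*} [NormedAddCommGroup E]
    (S : Set G) (z : G → E) : ℝ :=
  ⨆ s : S, ‖z (s : G)‖

/-!
Let `A = A_π^μ`. For a coboundary, `∫ d_π v dμ = v - A v`, and `‖A‖ < 1` makes `1 - A` invertible,
so `P z = d_π ((1 - A)⁻¹ ∫ z dμ)` is a projection of `Z¹(G,π)` onto `B¹(G,π)`; it is bounded for
`‖·‖_S` because `μ` lives on `S`. If `z` is a `‖·‖_S`-limit of coboundaries `d_π v`, then `z - P z`
equals `(z - d_π v) - P (z - d_π v)`, which is small on `S`; so `z` and `P z` agree on `S`, hence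
everywhere, since a cocycle is determined by its values on a generating set.
-/

section Coboundary

variable {G E : Type*} [NormedAddCommGroup E] [NormedSpace ℝ E] {π : G → E →L[ℝ] E}

lemma coboundary_add (v w : E) :
    coboundary π (v + w) = coboundary π v + coboundary π w := by
  funext g
  simp only [coboundary, map_add, Pi.add_apply]
  abel

lemma coboundary_sub (v w : E) :
    coboundary π (v - w) = coboundary π v - coboundary π w := by
  funext g
  simp only [coboundary, map_sub, Pi.sub_apply]
  abel

lemma coboundary_smul (c : ℝ) (v : E) : coboundary π (c • v) = c • coboundary π v := by
  funext g
  simp only [coboundary, map_smul, Pi.smul_apply, smul_sub]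

end Coboundary

section Cocycles

variable {G E : Type*} [Group G] [TopologicalSpace G] [NormedAddCommGroup E] [NormedSpace ℝ E]
  {π : G → E →L[ℝ] E} {z w : G → E}

namespace IsCocycle

lemma map_one (hπ_one : π 1 = ContinuousLinearMap.id ℝ E) (hz : IsCocycle π z) : z 1 = 0 := by
  have h := hz.2 1 1
  rw [one_mul, hπ_one] at h
  exact left_eq_add.mp h

lemma map_inv (hπ_one : π 1 = ContinuousLinearMap.id ℝ E) (hz : IsCocycle π z) (g : G) :
    z g⁻¹ = -(π g⁻¹) (z g) := by
  have h := hz.2 g⁻¹ g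
  rw [inv_mul_cancel, hz.map_one hπ_one] at h
  exact eq_neg_of_add_eq_zero_left h.symm

lemma sub (hz : IsCocycle π z) (hw : IsCocycle π w) : IsCocycle π (z - w) := by
  refine ⟨hz.1.sub hw.1, fun g h => ?_⟩
  simp only [Pi.sub_apply, hz.2, hw.2, map_sub]
  abel

lemma eq_of_eqOn_of_closure_eq_top (hπ_one : π 1 = ContinuousLinearMap.id ℝ E)
    (hz : IsCocycle π z) (hw : IsCocycle π w) {S : Set G} (hS : Subgroup.closure S = ⊤)
    (h : Set.EqOn z w S) : z = w := by
  funext g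
  have hg : g ∈ Subgroup.closure S := hS ▸ Subgroup.mem_top g
  induction hg using Subgroup.closure_induction with
  | mem x hx => exact h hx
  | one => rw [hz.map_one hπ_one, hw.map_one hπ_one]
  | mul x y _ _ ihx ihy => rw [hz.2, hw.2, ihx, ihy]
  | inv x _ ih => rw [hz.map_inv hπ_one, hw.map_inv hπ_one, ih]

end IsCocycle

lemma isCocycle_coboundary (hπ_mul : ∀ g h : G, π (g * h) = (π g).comp (π h))
    (hπ_cont : ∀ v : E, Continuous fun g => (π g) v) (v : E) :
    IsCocycle π (coboundary π v) := by
  refine ⟨continuous_const.sub (hπ_cont v), fun g h => ?_⟩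
  simp only [coboundary, hπ_mul, ContinuousLinearMap.comp_apply, map_sub]
  abel

end Cocycles

section NormS

variable {G E : Type*} [NormedAddCommGroup E] {S : Set G} {z : G → E}

lemma norm_le_normS [TopologicalSpace G] (hS : IsCompact S) (hz : Continuous z) {s : G}
    (hs : s ∈ S) : ‖z s‖ ≤ normS S z := by
  have hbdd : BddAbove (Set.range fun s : S => ‖z s‖) := by
    simpa only [Set.image_eq_range] using
      (hS.image_of_continuousOn hz.norm.continuousOn).bddAbove
  exact le_ciSup hbdd ⟨s, hs⟩

lemma normS_le {M : ℝ} (h : ∀ s ∈ S, ‖z s‖ ≤ M) (hM : 0 ≤ M) : normS S z ≤ M :=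
  Real.iSup_le (fun s => h s s.2) hM

lemma normS_coboundary_le [NormedSpace ℝ E] {π : G → E →L[ℝ] E}
    (hπ_isom : ∀ (g : G) (v : E), ‖(π g) v‖ = ‖v‖) (v : E) :
    normS S (coboundary π v) ≤ 2 * ‖v‖ := by
  refine normS_le (fun s _ => ?_) (by positivity)
  calc ‖v - (π s) v‖ ≤ ‖v‖ + ‖(π s) v‖ := norm_sub_le _ _
    _ = 2 * ‖v‖ := by rw [hπ_isom]; ring

end NormS

section Integral

variable {G E : Type*} [MeasurableSpace G] [NormedAddCommGroup E] {μ : Measure G} {S : Set G}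
  {z : G → E}

lemma Continuous.integrable_of_measure_compl_eq_zero [TopologicalSpace G] [OpensMeasurableSpace G]
    [IsFiniteMeasure μ] (hz : Continuous z) (hS : IsCompact S) (hμS : μ Sᶜ = 0) :
    Integrable z μ := by
  have hS_ae : ∀ᵐ g ∂μ, g ∈ S := mem_ae_iff.2 hμS
  borelize E
  have hmeas : AEStronglyMeasurable z μ :=
    aestronglyMeasurable_iff_aemeasurable_separable.2 ⟨hz.measurable.aemeasurable, z '' S,
      (hS.image hz).isSeparable, hS_ae.mono fun _ hs => Set.mem_image_of_mem z hs⟩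
  obtain ⟨M, hM⟩ := hS.exists_bound_of_continuousOn hz.continuousOn
  exact Integrable.of_bound hmeas M (hS_ae.mono fun _ hs => hM _ hs)

variable [NormedSpace ℝ E] {π : G → E →L[ℝ] E}

lemma norm_integral_le_normS [TopologicalSpace G] [IsProbabilityMeasure μ]
    (hz : Continuous z) (hS : IsCompact S) (hμS : μ Sᶜ = 0) : ‖∫ g, z g ∂μ‖ ≤ normS S z := by
  have hS_ae : ∀ᵐ g ∂μ, g ∈ S := mem_ae_iff.2 hμS
  have h : ∀ᵐ g ∂μ, ‖z g‖ ≤ normS S z :=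
    hS_ae.mono fun _ hs => norm_le_normS hS hz hs
  simpa using norm_integral_le_of_norm_le_const h

lemma exists_markovOperator_norm_lt_one (hint : ∀ v : E, Integrable (fun g => (π g) v) μ)
    {lam : ℝ} (hlam : lam < 1) (hcontr : ∀ v : E, ‖∫ g, (π g) v ∂μ‖ ≤ lam * ‖v‖) :
    ∃ A : E →L[ℝ] E, (∀ v, A v = ∫ g, (π g) v ∂μ) ∧ ‖A‖ < 1 := by
  let A : E →ₗ[ℝ] E :=
    { toFun := fun v => ∫ g, (π g) v ∂μ
      map_add' := fun v w => by simp only [map_add]; exact integral_add (hint v) (hint w)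
      map_smul' := fun c v => by simp only [map_smul, RingHom.id_apply]; exact integral_smul c _ }
  exact ⟨A.mkContinuous lam hcontr, fun _ => rfl,
    (A.mkContinuous_norm_le' hcontr).trans_lt (max_lt hlam one_pos)⟩

variable [CompleteSpace E]

lemma integral_coboundary [IsProbabilityMeasure μ] {v : E}
    (hv : Integrable (fun g => (π g) v) μ) :
    ∫ g, coboundary π v g ∂μ = v - ∫ g, (π g) v ∂μ := by
  simp only [coboundary]
  rw [integral_sub (integrable_const v) hv, integral_const, probReal_univ, one_smul]

lemma exists_leftInverse_integral_coboundary [IsProbabilityMeasure μ]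
    (hint : ∀ v : E, Integrable (fun g => (π g) v) μ)
    {lam : ℝ} (hlam : lam < 1) (hcontr : ∀ v : E, ‖∫ g, (π g) v ∂μ‖ ≤ lam * ‖v‖) :
    ∃ B : E →L[ℝ] E, ∀ v, B (∫ g, coboundary π v g ∂μ) = v := by
  obtain ⟨A, hA, hA_lt⟩ := exists_markovOperator_norm_lt_one hint hlam hcontr
  let u := Units.oneSub A hA_lt
  refine ⟨↑u⁻¹, fun v => ?_⟩
  have hu : (u : E →L[ℝ] E) v = ∫ g, coboundary π v g ∂μ := by
    rw [integral_coboundary (hint v), ← hA]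
    rfl
  rw [← hu, ← mul_apply_eq_comp, u.inv_mul, one_apply_eq_self]

end Integral

section Projection

variable {G E : Type*} [MeasurableSpace G] [NormedAddCommGroup E] [NormedSpace ℝ E]
  {π : G → E →L[ℝ] E} {μ : Measure G} {B : E →L[ℝ] E} {z w : G → E}

noncomputable def cocycleProjection (π : G → E →L[ℝ] E) (μ : Measure G) (B : E →L[ℝ] E)
    (z : G → E) : G → E :=
  coboundary π (B (∫ g, z g ∂μ))

lemma cocycleProjection_coboundary (hB : ∀ v, B (∫ g, coboundary π v g ∂μ) = v) (v : E) :
    cocycleProjection π μ B (coboundary π v) = coboundary π v := by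
  rw [cocycleProjection, hB]

lemma coboundary_injective_of_leftInverse (hB : ∀ v, B (∫ g, coboundary π v g ∂μ) = v) :
    Function.Injective (coboundary π) := fun v w h => by
  rw [← hB v, ← hB w, h]

lemma cocycleProjection_add (hz : Integrable z μ) (hw : Integrable w μ) :
    cocycleProjection π μ B (z + w) = cocycleProjection π μ B z + cocycleProjection π μ B w := by
  simp only [cocycleProjection, Pi.add_apply, integral_add hz hw, map_add, coboundary_add]

lemma cocycleProjection_sub (hz : Integrable z μ) (hw : Integrable w μ) :
    cocycleProjection π μ B (z - w) = cocycleProjection π μ B z - cocycleProjection π μ B w := by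
  simp only [cocycleProjection, Pi.sub_apply, integral_sub hz hw, map_sub, coboundary_sub]

lemma cocycleProjection_smul (c : ℝ) (z : G → E) :
    cocycleProjection π μ B (c • z) = c • cocycleProjection π μ B z := by
  simp only [cocycleProjection, Pi.smul_apply, integral_smul, map_smul, coboundary_smul]

variable [TopologicalSpace G] {S : Set G}

lemma normS_cocycleProjection_le [IsProbabilityMeasure μ]
    (hπ_isom : ∀ (g : G) (v : E), ‖(π g) v‖ = ‖v‖) (hS : IsCompact S) (hμS : μ Sᶜ = 0)
    (hz : Continuous z) : normS S (cocycleProjection π μ B z) ≤ 2 * ‖B‖ * normS S z :=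
  calc normS S (cocycleProjection π μ B z) ≤ 2 * ‖B (∫ g, z g ∂μ)‖ :=
        normS_coboundary_le hπ_isom _
    _ ≤ 2 * (‖B‖ * normS S z) := by
        gcongr
        exact B.le_opNorm_of_le (norm_integral_le_normS hz hS hμS)
    _ = 2 * ‖B‖ * normS S z := by ring

lemma norm_sub_cocycleProjection_le [IsProbabilityMeasure μ]
    (hπ_isom : ∀ (g : G) (v : E), ‖(π g) v‖ = ‖v‖) (hπ_cont : ∀ v : E, Continuous fun g => (π g) v)
    (hS : IsCompact S) (hμS : μ Sᶜ = 0) (hz : Continuous z) {s : G} (hs : s ∈ S) :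
    ‖z s - cocycleProjection π μ B z s‖ ≤ (1 + 2 * ‖B‖) * normS S z :=
  calc ‖z s - cocycleProjection π μ B z s‖
      ≤ normS S z + normS S (cocycleProjection π μ B z) :=
        (norm_sub_le _ _).trans (add_le_add (norm_le_normS hS hz hs)
          (norm_le_normS hS (continuous_const.sub (hπ_cont _)) hs))
    _ ≤ normS S z + 2 * ‖B‖ * normS S z :=
        add_le_add le_rfl (normS_cocycleProjection_le hπ_isom hS hμS hz)
    _ = (1 + 2 * ‖B‖) * normS S z := by ring

lemma eqOn_cocycleProjection_of_forall_normS_lt [OpensMeasurableSpace G] [IsProbabilityMeasure μ]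
    (hπ_isom : ∀ (g : G) (v : E), ‖(π g) v‖ = ‖v‖) (hπ_cont : ∀ v : E, Continuous fun g => (π g) v)
    (hS : IsCompact S) (hμS : μ Sᶜ = 0) (hB : ∀ v, B (∫ g, coboundary π v g ∂μ) = v)
    (hz : Continuous z) (happrox : ∀ ε > (0 : ℝ), ∃ v : E, normS S (z - coboundary π v) < ε) :
    Set.EqOn z (cocycleProjection π μ B z) S := by
  intro s hs
  rw [← sub_eq_zero, ← norm_le_zero_iff]
  refine le_of_forall_pos_le_add fun ε hε => ?_
  have hC : 0 < 1 + 2 * ‖B‖ := by positivity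
  obtain ⟨v, hv⟩ := happrox (ε / (1 + 2 * ‖B‖)) (div_pos hε hC)
  have hdv : Continuous (coboundary π v) := continuous_const.sub (hπ_cont v)
  have hshift : z s - cocycleProjection π μ B z s =
      (z - coboundary π v) s - cocycleProjection π μ B (z - coboundary π v) s := by
    rw [cocycleProjection_sub (hz.integrable_of_measure_compl_eq_zero hS hμS)
      (hdv.integrable_of_measure_compl_eq_zero hS hμS), cocycleProjection_coboundary hB]
    simp only [Pi.sub_apply]
    abel
  calc ‖z s - cocycleProjection π μ B z s‖
      ≤ (1 + 2 * ‖B‖) * normS S (z - coboundary π v) :=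
        hshift ▸ norm_sub_cocycleProjection_le hπ_isom hπ_cont hS hμS (hz.sub hdv) hs
    _ ≤ (1 + 2 * ‖B‖) * (ε / (1 + 2 * ‖B‖)) := by gcongr
    _ = 0 + ε := by field_simp; ring

variable [Group G]

lemma IsCocycle.eq_cocycleProjection_of_forall_normS_lt [OpensMeasurableSpace G]
    [IsProbabilityMeasure μ] (hπ_mul : ∀ g h : G, π (g * h) = (π g).comp (π h))
    (hπ_one : π 1 = ContinuousLinearMap.id ℝ E) (hπ_isom : ∀ (g : G) (v : E), ‖(π g) v‖ = ‖v‖)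
    (hπ_cont : ∀ v : E, Continuous fun g => (π g) v) (hS : IsCompact S)
    (hS_gen : Subgroup.closure S = ⊤) (hμS : μ Sᶜ = 0) (hB : ∀ v, B (∫ g, coboundary π v g ∂μ) = v)
    (hz : IsCocycle π z) (happrox : ∀ ε > (0 : ℝ), ∃ v : E, normS S (z - coboundary π v) < ε) :
    z = cocycleProjection π μ B z :=
  hz.eq_of_eqOn_of_closure_eq_top hπ_one (isCocycle_coboundary hπ_mul hπ_cont _) hS_gen
    (eqOn_cocycleProjection_of_forall_normS_lt hπ_isom hπ_cont hS hμS hB hz.1 happrox)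

lemma IsCocycle.existsUnique_coboundary_add_ker [OpensMeasurableSpace G] [IsFiniteMeasure μ]
    (hπ_mul : ∀ g h : G, π (g * h) = (π g).comp (π h))
    (hπ_cont : ∀ v : E, Continuous fun g => (π g) v) (hS : IsCompact S) (hμS : μ Sᶜ = 0)
    (hB : ∀ v, B (∫ g, coboundary π v g ∂μ) = v) (hz : IsCocycle π z) :
    ∃! p : E × (G → E), IsCocycle π p.2 ∧ cocycleProjection π μ B p.2 = 0 ∧
      z = coboundary π p.1 + p.2 := by
  have hint : ∀ {w : G → E}, Continuous w → Integrable w μ := fun hw =>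
    hw.integrable_of_measure_compl_eq_zero hS hμS
  have hP : IsCocycle π (cocycleProjection π μ B z) := isCocycle_coboundary hπ_mul hπ_cont _
  refine ⟨(B (∫ g, z g ∂μ), z - cocycleProjection π μ B z), ⟨hz.sub hP, ?_, ?_⟩, ?_⟩
  · rw [cocycleProjection_sub (hint hz.1) (hint hP.1), cocycleProjection,
      cocycleProjection_coboundary hB, sub_self]
  · exact (add_sub_cancel _ _).symm
  · rintro ⟨v, y⟩ ⟨hy, hPy, rfl⟩
    have hPz : cocycleProjection π μ B (coboundary π v + y) = coboundary π v := by
      rw [cocycleProjection_add (hint (isCocycle_coboundary hπ_mul hπ_cont v).1) (hint hy.1),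
        cocycleProjection_coboundary hB, hPy, add_zero]
    ext
    · exact (coboundary_injective_of_leftInverse hB hPz).symm
    · simp only [hPz, add_sub_cancel_left]

end Projection

theorem stmt_0_general {G E : Type*} [Group G] [TopologicalSpace G]
    [MeasurableSpace G] [BorelSpace G]
    [NormedAddCommGroup E] [NormedSpace ℝ E] [CompleteSpace E]
    (π : G → E →L[ℝ] E)
    (hπ_mul : ∀ g h : G, π (g * h) = (π g).comp (π h))
    (hπ_one : π 1 = ContinuousLinearMap.id ℝ E)
    (hπ_isom : ∀ (g : G) (v : E), ‖(π g) v‖ = ‖v‖)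
    (hπ_cont : ∀ v : E, Continuous fun g => (π g) v)
    (S : Set G) (hS_comp : IsCompact S)
    (hS_gen : Subgroup.closure S = ⊤)
    (μ : Measure G) [IsProbabilityMeasure μ]
    (hμS : μ Sᶜ = 0)
    (lam : ℝ) (hlam : lam < 1)
    (hcontr : ∀ v : E, ‖∫ g, (π g) v ∂μ‖ ≤ lam * ‖v‖) :
    ∃ P : (G → E) → (G → E),
      -- `P` maps cocycles to cocycles
      (∀ z, IsCocycle π z → IsCocycle π (P z)) ∧
      -- `P` is linear on `Z¹(G,π)`
      (∀ z z', IsCocycle π z → IsCocycle π z' → P (z + z') = P z + P z') ∧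
      (∀ (c : ℝ) (z), IsCocycle π z → P (c • z) = c • P z) ∧
      -- `P` is bounded (hence continuous) w.r.t. `‖·‖_S`
      (∃ C : ℝ, ∀ z, IsCocycle π z → normS S (P z) ≤ C * normS S z) ∧
      -- `P` is idempotent
      (∀ z, IsCocycle π z → P (P z) = P z) ∧
      -- the range of `P` is contained in `B¹(G,π)` ...
      (∀ z, IsCocycle π z → ∃ v : E, P z = coboundary π v) ∧
      -- ... and `P` is the identity on `B¹(G,π)` (so the range equals `B¹(G,π)`)
      (∀ v : E, P (coboundary π v) = coboundary π v) ∧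
      -- `B¹(G,π)` is closed in `(Z¹(G,π), ‖·‖_S)`
      (∀ z, IsCocycle π z →
        (∀ ε > (0 : ℝ), ∃ v : E, normS S (z - coboundary π v) < ε) →
        ∃ v : E, z = coboundary π v) ∧
      -- `Z¹(G,π)` is the direct sum of `B¹(G,π)` and `ker P`
      (∀ z, IsCocycle π z →
        ∃! p : E × (G → E),
          IsCocycle π p.2 ∧ P p.2 = 0 ∧ z = coboundary π p.1 + p.2) := by
  have hint : ∀ {z : G → E}, Continuous z → Integrable z μ := fun hz =>
    hz.integrable_of_measure_compl_eq_zero hS_comp hμS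
  obtain ⟨B, hB⟩ := exists_leftInverse_integral_coboundary (fun v => hint (hπ_cont v)) hlam hcontr
  refine ⟨cocycleProjection π μ B, fun z _ => isCocycle_coboundary hπ_mul hπ_cont _,
    fun z z' hz hz' => cocycleProjection_add (hint hz.1) (hint hz'.1),
    fun c z _ => cocycleProjection_smul c z,
    ⟨2 * ‖B‖, fun z hz => normS_cocycleProjection_le hπ_isom hS_comp hμS hz.1⟩,
    fun z _ => cocycleProjection_coboundary hB _, fun z _ => ⟨_, rfl⟩,
    cocycleProjection_coboundary hB, fun z hz happrox => ⟨B (∫ g, z g ∂μ), ?_⟩,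
    fun z hz => hz.existsUnique_coboundary_add_ker hπ_mul hπ_cont hS_comp hμS hB⟩
  exact hz.eq_cocycleProjection_of_forall_normS_lt hπ_mul hπ_one hπ_isom hπ_cont hS_comp hS_gen
    hμS hB happrox

/-- there exists a bounded (w.r.t. `‖·‖_S`) linear projection
`P : Z¹(G,π) → Z¹(G,π)` whose range is `B¹(G,π)` and which is the identity on `B¹(G,π)`;
in particular `B¹(G,π)` is closed and complemented in `Z¹(G,π)`, with
`Z¹(G,π) = B¹(G,π) ⊕ ker P`. -/
theorem stmt_0 {G E : Type*} [Group G] [TopologicalSpace G] [IsTopologicalGroup G]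
    [MeasurableSpace G] [BorelSpace G]
    [NormedAddCommGroup E] [NormedSpace ℝ E] [CompleteSpace E]
    (π : G → E →L[ℝ] E)
    (hπ_mul : ∀ g h : G, π (g * h) = (π g).comp (π h))
    (hπ_one : π 1 = ContinuousLinearMap.id ℝ E)
    (hπ_isom : ∀ (g : G) (v : E), ‖(π g) v‖ = ‖v‖)
    (hπ_cont : ∀ v : E, Continuous fun g => (π g) v)
    (S : Set G) (hS_comp : IsCompact S) (hS_symm : ∀ s ∈ S, s⁻¹ ∈ S)
    (hS_gen : Subgroup.closure S = ⊤)
    (μ : Measure G) [IsProbabilityMeasure μ]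
    (hμK : ∃ K : Set G, IsCompact K ∧ μ Kᶜ = 0)
    (hμS : μ Sᶜ = 0)
    (lam : ℝ) (hlam : lam < 1)
    (hcontr : ∀ v : E, ‖∫ g, (π g) v ∂μ‖ ≤ lam * ‖v‖) :
    ∃ P : (G → E) → (G → E),
      -- `P` maps cocycles to cocycles
      (∀ z, IsCocycle π z → IsCocycle π (P z)) ∧
      -- `P` is linear on `Z¹(G,π)`
      (∀ z z', IsCocycle π z → IsCocycle π z' → P (z + z') = P z + P z') ∧
      (∀ (c : ℝ) (z), IsCocycle π z → P (c • z) = c • P z) ∧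
      -- `P` is bounded (hence continuous) w.r.t. `‖·‖_S`
      (∃ C : ℝ, ∀ z, IsCocycle π z → normS S (P z) ≤ C * normS S z) ∧
      -- `P` is idempotent
      (∀ z, IsCocycle π z → P (P z) = P z) ∧
      -- the range of `P` is contained in `B¹(G,π)` ...
      (∀ z, IsCocycle π z → ∃ v : E, P z = coboundary π v) ∧
      -- ... and `P` is the identity on `B¹(G,π)` (so the range equals `B¹(G,π)`)
      (∀ v : E, P (coboundary π v) = coboundary π v) ∧
      -- `B¹(G,π)` is closed in `(Z¹(G,π), ‖·‖_S)`
      (∀ z, IsCocycle π z →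
        (∀ ε > (0 : ℝ), ∃ v : E, normS S (z - coboundary π v) < ε) →
        ∃ v : E, z = coboundary π v) ∧
      -- `Z¹(G,π)` is the direct sum of `B¹(G,π)` and `ker P`
      (∀ z, IsCocycle π z →
        ∃! p : E × (G → E),
          IsCocycle π p.2 ∧ P p.2 = 0 ∧ z = coboundary π p.1 + p.2) :=
  stmt_0_general π hπ_mul hπ_one hπ_isom hπ_cont S hS_comp hS_gen μ hμS lam hlam hcontr
end

section
/- Suppose π has no almost invariant vectors with respect to S, i.e. there exists κ > 0 such that sup_{s ∈ S} ‖π_s v − v‖ ≥ κ‖v‖ for every v ∈ E. Then the space of 1-coboundaries B¹(G,π) is a closed subspace of Z¹(G,π) with respect to the norm ‖·‖_S. -/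
open MeasureTheory

/-!
Restriction to `S` is an isometry from `(Z¹(G,π), ‖·‖_S)` into `ℓ^∞(S, E)`. The absence of almost
invariant vectors says exactly that `d_π : E → ℓ^∞(S, E)` is bounded below, so, `E` being complete,
its range is closed; hence a cocycle `z` approximable by coboundaries agrees on `S` with some
`d_π w`. The zero set of the cocycle `z - d_π w` is a subgroup containing the generating set `S`,
so `z = d_π w`.
-/

open scoped ENNReal

section Cocycle

variable {G E : Type*} [Group G] [NormedAddCommGroup E] [NormedSpace ℝ E]
  {π : G → E →L[ℝ] E}

theorem coboundary_mul (hπ_mul : ∀ g h : G, π (g * h) = (π g).comp (π h)) (v : E) (g h : G) :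
    coboundary π v (g * h) = coboundary π v g + π g (coboundary π v h) := by
  simp only [coboundary, hπ_mul, ContinuousLinearMap.comp_apply, map_sub]
  abel

theorem cocycle_one (hπ_one : π 1 = ContinuousLinearMap.id ℝ E) {c : G → E}
    (hc : ∀ g h, c (g * h) = c g + π g (c h)) : c 1 = 0 := by
  simpa [hπ_one] using hc 1 1

def cocycleKer (hπ_one : π 1 = ContinuousLinearMap.id ℝ E) (c : G → E)
    (hc : ∀ g h, c (g * h) = c g + π g (c h)) : Subgroup G where
  carrier := {g | c g = 0}
  one_mem' := cocycle_one hπ_one hc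
  mul_mem' {a b} (ha : c a = 0) (hb : c b = 0) := show c (a * b) = 0 by
    rw [hc, ha, hb, map_zero, add_zero]
  inv_mem' {a} (ha : c a = 0) := show c a⁻¹ = 0 by
    have := hc a⁻¹ a
    rwa [inv_mul_cancel, cocycle_one hπ_one hc, ha, map_zero, add_zero, eq_comm] at this

theorem eq_coboundary_of_eqOn_of_closure_eq_top
    (hπ_mul : ∀ g h : G, π (g * h) = (π g).comp (π h))
    (hπ_one : π 1 = ContinuousLinearMap.id ℝ E) {z : G → E}
    (hz : ∀ g h, z (g * h) = z g + π g (z h)) {S : Set G} (hS_gen : Subgroup.closure S = ⊤)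
    {w : E} (hzw : S.EqOn z (coboundary π w)) : z = coboundary π w := by
  set c := z - coboundary π w
  have hc : ∀ g h, c (g * h) = c g + π g (c h) := fun g h => by
    simp only [c, Pi.sub_apply, hz, coboundary_mul hπ_mul, map_sub]
    abel
  have hle : Subgroup.closure S ≤ cocycleKer hπ_one c hc :=
    Subgroup.closure_le _ |>.2 fun s hs => sub_eq_zero.2 (hzw hs)
  funext g
  exact sub_eq_zero.1 (hle (hS_gen ▸ Subgroup.mem_top g))

end Cocycle

section Linfty

variable {G E : Type*} [NormedAddCommGroup E]

noncomputable def restrictLinfty (S : Set G) (f : G → E)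
    (hf : BddAbove (Set.range fun s : S => ‖f s‖)) : lp (fun _ : S => E) ∞ :=
  ⟨fun s => f s, memℓp_infty hf⟩

variable [NormedSpace ℝ E] {π : G → E →L[ℝ] E}

theorem norm_coboundary_le (hπ_isom : ∀ (g : G) (v : E), ‖(π g) v‖ = ‖v‖) (v : E) (g : G) :
    ‖coboundary π v g‖ ≤ 2 * ‖v‖ := by
  have := norm_sub_le v (π g v)
  rw [hπ_isom] at this
  unfold coboundary
  linarith

noncomputable def coboundaryLinfty (hπ_isom : ∀ (g : G) (v : E), ‖(π g) v‖ = ‖v‖) (S : Set G) :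
    E →L[ℝ] lp (fun _ : S => E) ∞ :=
  LinearMap.mkContinuous
    { toFun v := restrictLinfty S (coboundary π v)
        ⟨2 * ‖v‖, by rintro _ ⟨s, rfl⟩; exact norm_coboundary_le hπ_isom v s⟩
      map_add' v w := lp.ext <| funext fun s => by
        simp only [restrictLinfty, coboundary, lp.coeFn_add, Pi.add_apply, map_add]
        abel
      map_smul' a v := lp.ext <| funext fun s => by
        simp [restrictLinfty, coboundary, lp.coeFn_smul, smul_sub] }
    2 fun v => lp.norm_le_of_forall_le (by positivity) fun s => norm_coboundary_le hπ_isom v s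

theorem isClosed_range_coboundaryLinfty [CompleteSpace E]
    (hπ_isom : ∀ (g : G) (v : E), ‖(π g) v‖ = ‖v‖) (S : Set G) {κ : ℝ} (hκ : 0 < κ)
    (hgap : ∀ v : E, κ * ‖v‖ ≤ ⨆ s : S, ‖(π (s : G)) v - v‖) :
    IsClosed (Set.range (coboundaryLinfty hπ_isom S)) := by
  refine ((coboundaryLinfty hπ_isom S).antilipschitz_of_bound (K := ⟨κ⁻¹, by positivity⟩)
    fun v => ?_).isClosed_range (coboundaryLinfty hπ_isom S).uniformContinuous
  have hnorm : ‖coboundaryLinfty hπ_isom S v‖ = ⨆ s : S, ‖(π (s : G)) v - v‖ := by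
    simp only [lp.norm_eq_ciSup, norm_sub_rev]
    rfl
  change ‖v‖ ≤ κ⁻¹ * _
  rw [hnorm, inv_mul_eq_div, le_div_iff₀ hκ, mul_comm]
  exact hgap v

end Linfty

theorem stmt_11_general {G E : Type*} [Group G] [TopologicalSpace G]
    [NormedAddCommGroup E] [NormedSpace ℝ E] [CompleteSpace E]
    (π : G → E →L[ℝ] E)
    (hπ_mul : ∀ g h : G, π (g * h) = (π g).comp (π h))
    (hπ_one : π 1 = ContinuousLinearMap.id ℝ E)
    (hπ_isom : ∀ (g : G) (v : E), ‖(π g) v‖ = ‖v‖)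
    (S : Set G) (hS_comp : IsCompact S)
    (hS_gen : Subgroup.closure S = ⊤)
    (κ : ℝ) (hκ : 0 < κ)
    (hgap : ∀ v : E, κ * ‖v‖ ≤ ⨆ s : S, ‖(π (s : G)) v - v‖) :
    ∀ z : G → E, IsCocycle π z →
      (∀ ε > (0 : ℝ), ∃ v : E, normS S (z - coboundary π v) < ε) →
      ∃ v : E, z = coboundary π v := by
  intro z hz hap
  obtain ⟨C, hC⟩ := hS_comp.exists_bound_of_continuousOn hz.1.continuousOn
  set zS := restrictLinfty S z ⟨C, by rintro _ ⟨s, rfl⟩; exact hC s s.2⟩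
  have hzS : zS ∈ closure (Set.range (coboundaryLinfty hπ_isom S)) :=
    Metric.mem_closure_iff.2 fun ε hε => by
      obtain ⟨v, hv⟩ := hap ε hε
      exact ⟨_, ⟨v, rfl⟩, by rw [dist_eq_norm, lp.norm_eq_ciSup]; exact hv⟩
  obtain ⟨w, hw⟩ := (isClosed_range_coboundaryLinfty hπ_isom S hκ hgap).closure_subset hzS
  exact ⟨w, eq_coboundary_of_eqOn_of_closure_eq_top hπ_mul hπ_one hz.2 hS_gen
    fun s hs => (congrArg (· ⟨s, hs⟩) hw).symm⟩

/-- if `π` has no almost invariant vectors with respect to `S`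
(`sup_{s ∈ S} ‖π_s v − v‖ ≥ κ‖v‖` for some `κ > 0`), then `B¹(G,π)` is closed in
`(Z¹(G,π), ‖·‖_S)`. -/
theorem stmt_11 {G E : Type*} [Group G] [TopologicalSpace G] [IsTopologicalGroup G]
    [NormedAddCommGroup E] [NormedSpace ℝ E] [CompleteSpace E]
    (π : G → E →L[ℝ] E)
    (hπ_mul : ∀ g h : G, π (g * h) = (π g).comp (π h))
    (hπ_one : π 1 = ContinuousLinearMap.id ℝ E)
    (hπ_isom : ∀ (g : G) (v : E), ‖(π g) v‖ = ‖v‖)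
    (hπ_cont : ∀ v : E, Continuous fun g => (π g) v)
    (S : Set G) (hS_comp : IsCompact S) (hS_symm : ∀ s ∈ S, s⁻¹ ∈ S)
    (hS_gen : Subgroup.closure S = ⊤)
    (κ : ℝ) (hκ : 0 < κ)
    (hgap : ∀ v : E, κ * ‖v‖ ≤ ⨆ s : S, ‖(π (s : G)) v - v‖) :
    ∀ z : G → E, IsCocycle π z →
      (∀ ε > (0 : ℝ), ∃ v : E, normS S (z - coboundary π v) < ε) →
      ∃ v : E, z = coboundary π v :=
  stmt_11_general π hπ_mul hπ_one hπ_isom S hS_comp hS_gen κ hκ hgap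
end

section
/- Suppose ‖A_π^μ v‖ ≤ λ‖v‖ for all v ∈ E with λ < 1, and suppose supp μ ⊆ S. Let P : Z¹(G,π) → Z¹(G,π) be defined by P z = d_π b(z), where b(z) is the unique fixed point of L_{π,z}^μ. Then every 1-cocycle z admits a unique decomposition z = d_π b(z) + (z − d_π b(z)) with d_π b(z) ∈ B¹(G,π) and z − d_π b(z) ∈ ker P, and the quotient map Z¹(G,π) → Z¹(G,π)/B¹(G,π) restricts to a linear isomorphism of ker P onto the reduced cohomology H¹(G,π) = Z¹(G,π)/B¹(G,π). -/
/-! Since `‖A_π^μ v‖ ≤ λ‖v‖` with `λ < 1`, the map `v ↦ A_π^μ v + z^μ` has at most one fixed point,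
so `b(z)` depends linearly on `z`; and `b(d_π v) = v`, because `(d_π v)^μ = v - A_π^μ v` makes `v`
itself that fixed point. Thus `P = d_π ∘ b` is a linear idempotent with range `B¹(G,π)`, hence
`Z¹(G,π) = B¹(G,π) ⊕ ker P`, and a complement of `B¹(G,π)` maps isomorphically onto the quotient. -/

open MeasureTheory

/-- The space `Z¹(G,π)` of continuous 1-cocycles for `π`, as a submodule of `G → E`. -/
def cocycleSubmodule {G E : Type*} [Group G] [TopologicalSpace G]
    [NormedAddCommGroup E] [NormedSpace ℝ E] (π : G → E →L[ℝ] E) :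
    Submodule ℝ (G → E) where
  carrier := {z | Continuous z ∧ ∀ g h : G, z (g * h) = z g + (π g) (z h)}
  add_mem' := by
    rintro z z' ⟨hc, hz⟩ ⟨hc', hz'⟩
    refine ⟨hc.add hc', fun g h => ?_⟩
    simp only [Pi.add_apply, hz g h, hz' g h, map_add]
    abel
  zero_mem' := ⟨continuous_const, by simp⟩
  smul_mem' := by
    rintro c z ⟨hc, hz⟩
    refine ⟨hc.const_smul c, fun g h => ?_⟩
    simp only [Pi.smul_apply, hz g h, ContinuousLinearMap.map_smul, smul_add]

/-- The codifferential `d_π : E → Z¹(G,π)`, `(d_π v)(g) = v − π_g v`, as a linear map. -/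
def codiff {G E : Type*} [Group G] [TopologicalSpace G]
    [NormedAddCommGroup E] [NormedSpace ℝ E] (π : G → E →L[ℝ] E)
    (hπ_mul : ∀ g h : G, π (g * h) = (π g).comp (π h))
    (hπ_cont : ∀ v : E, Continuous fun g => (π g) v) :
    E →ₗ[ℝ] cocycleSubmodule π where
  toFun v := ⟨fun g => v - (π g) v,
    ⟨continuous_const.sub (hπ_cont v), fun g h => by
      simp only [hπ_mul g h, ContinuousLinearMap.comp_apply, map_sub]
      abel⟩⟩
  map_add' v w := by
    apply Subtype.ext
    funext g
    show (v + w) - (π g) (v + w) = (v - (π g) v) + (w - (π g) w)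
    simp only [map_add]
    abel
  map_smul' c v := by
    apply Subtype.ext
    funext g
    show (c • v) - (π g) (c • v) = c • (v - (π g) v)
    simp only [ContinuousLinearMap.map_smul, smul_sub]

theorem Continuous.integrable_of_isCompact_of_measure_compl_eq_zero {X F : Type*}
    [TopologicalSpace X] [R1Space X] [MeasurableSpace X] [OpensMeasurableSpace X]
    [NormedAddCommGroup F] {μ : Measure X} [IsFiniteMeasureOnCompacts μ] {K : Set X}
    (hK : IsCompact K) (hμK : μ Kᶜ = 0) {f : X → F} (hf : Continuous f) : Integrable f μ := by
  have hae : ∀ᵐ x ∂μ, x ∈ closure K :=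
    measure_mono_null (fun _ hx h => hx (subset_closure h)) hμK
  rw [← Measure.restrict_eq_self_of_ae_mem hae]
  exact hf.continuousOn.integrableOn_compact' hK.closure isClosed_closure.measurableSet

theorem eq_zero_of_map_eq_self_of_norm_map_le {E : Type*} [NormedAddCommGroup E] {A : E → E}
    {lam : ℝ} (hlam : lam < 1) {v : E} (hAv : ‖A v‖ ≤ lam * ‖v‖) (hv : A v = v) : v = 0 := by
  rw [hv] at hAv
  exact norm_le_zero_iff.mp (by nlinarith [norm_nonneg v])

section FixedPoint

variable {R M E : Type*} [Ring R] [AddCommGroup M] [Module R M] [AddCommGroup E] [Module R E]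
  {A : E →ₗ[R] E}

theorem eq_of_eq_map_add_of_eq_map_add (hA : ∀ v, A v = v → v = 0) {c v w : E}
    (hv : v = A v + c) (hw : w = A w + c) : v = w := by
  refine sub_eq_zero.mp (hA _ ?_)
  rw [map_sub]
  conv_rhs => rw [hv, hw]
  abel

theorem isLinearMap_of_eq_map_add (hA : ∀ v, A v = v → v = 0) (m : M →ₗ[R] E) {b : M → E}
    (hb : ∀ z, b z = A (b z) + m z) : IsLinearMap R b where
  map_add z z' := eq_of_eq_map_add_of_eq_map_add hA (hb (z + z')) <| by
    rw [map_add, map_add]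
    conv_lhs => rw [hb z, hb z']
    abel
  map_smul c z := eq_of_eq_map_add_of_eq_map_add hA (hb (c • z)) <| by
    rw [map_smul, map_smul, ← smul_add, ← hb]

end FixedPoint

section Splitting

variable {R E Z : Type*} [Ring R] [AddCommGroup E] [Module R E] [AddCommGroup Z] [Module R Z]
  {d : E →ₗ[R] Z} {β : Z →ₗ[R] E}

theorem isIdempotentElem_comp_of_leftInverse (hβd : Function.LeftInverse β d) :
    IsIdempotentElem (d ∘ₗ β) :=
  LinearMap.ext fun z => by simp [Module.End.mul_apply, hβd (β z)]

theorem isCompl_range_ker_comp_of_leftInverse (hβd : Function.LeftInverse β d) :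
    IsCompl (LinearMap.range d) (LinearMap.ker (d ∘ₗ β)) := by
  have h := LinearMap.IsIdempotentElem.isCompl (isIdempotentElem_comp_of_leftInverse hβd)
  rwa [LinearMap.range_comp_of_range_eq_top d (LinearMap.range_eq_top.mpr hβd.surjective)] at h

theorem existsUnique_add_of_leftInverse (hβd : Function.LeftInverse β d) (z : Z) :
    ∃! p : E × Z, z = d p.1 + p.2 ∧ d (β p.2) = 0 := by
  refine ⟨(β z, z - d (β z)), ⟨(add_sub_cancel _ _).symm, by simp [hβd (β z)]⟩, ?_⟩
  rintro ⟨v, w⟩ ⟨rfl, hw⟩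
  have hβw : β w = 0 := by simpa [hβd (β w)] using congrArg β hw
  simp [hβd v, hβw]

theorem mk_injOn_ker_comp_of_leftInverse (hβd : Function.LeftInverse β d) {w w' : Z}
    (hw : d (β w) = 0) (hw' : d (β w') = 0)
    (h : Submodule.Quotient.mk (p := LinearMap.range d) w = Submodule.Quotient.mk w') :
    w = w' := by
  have hcompl := isCompl_range_ker_comp_of_leftInverse hβd
  have key := congrArg (Submodule.quotientEquivOfIsCompl _ _ hcompl) h
  rw [Submodule.quotientEquivOfIsCompl_apply_mk_right hcompl ⟨w, hw⟩,
    Submodule.quotientEquivOfIsCompl_apply_mk_right hcompl ⟨w', hw'⟩] at key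
  exact congrArg Subtype.val key

theorem exists_mk_eq_of_leftInverse (hβd : Function.LeftInverse β d) (z : Z) :
    ∃ w, d (β w) = 0 ∧
      Submodule.Quotient.mk (p := LinearMap.range d) w = Submodule.Quotient.mk z := by
  set e := Submodule.quotientEquivOfIsCompl _ _ (isCompl_range_ker_comp_of_leftInverse hβd)
  exact ⟨e (Submodule.Quotient.mk z), (e _).2, e.symm_apply_apply _⟩

end Splitting

section Averaging

variable {G E : Type*} [Group G] [TopologicalSpace G] [MeasurableSpace G]
  [NormedAddCommGroup E] [NormedSpace ℝ E] (π : G → E →L[ℝ] E) (μ : Measure G)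

noncomputable def markovOperator (hπμ : ∀ v, Integrable (fun g => π g v) μ) : E →ₗ[ℝ] E where
  toFun v := ∫ g, π g v ∂μ
  map_add' v w := by simp only [map_add]; exact integral_add (hπμ v) (hπμ w)
  map_smul' c v := by simp only [map_smul]; exact integral_smul c _

noncomputable def cocycleMean (hμ : ∀ z ∈ cocycleSubmodule π, Integrable z μ) :
    cocycleSubmodule π →ₗ[ℝ] E where
  toFun z := ∫ g, (z : G → E) g ∂μ
  map_add' z z' := integral_add (hμ z z.2) (hμ z' z'.2)
  map_smul' c _ := integral_smul c _

theorem cocycleMean_codiff [CompleteSpace E] [IsProbabilityMeasure μ]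
    (hπ_mul : ∀ g h : G, π (g * h) = (π g).comp (π h))
    (hπ_cont : ∀ v : E, Continuous fun g => (π g) v)
    (hπμ : ∀ v, Integrable (fun g => π g v) μ) (hμ : ∀ z ∈ cocycleSubmodule π, Integrable z μ)
    (v : E) :
    cocycleMean π μ hμ (codiff π hπ_mul hπ_cont v) = v - markovOperator π μ hπμ v := by
  change ∫ g, (v - π g v) ∂μ = v - ∫ g, π g v ∂μ
  rw [integral_sub (integrable_const v) (hπμ v), integral_const, probReal_univ, one_smul]

end Averaging

theorem stmt_14_general {G E : Type*} [Group G] [TopologicalSpace G] [IsTopologicalGroup G]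
    [MeasurableSpace G] [BorelSpace G]
    [NormedAddCommGroup E] [NormedSpace ℝ E] [CompleteSpace E]
    (π : G → E →L[ℝ] E)
    (hπ_mul : ∀ g h : G, π (g * h) = (π g).comp (π h))
    (hπ_cont : ∀ v : E, Continuous fun g => (π g) v)
    (μ : Measure G) [IsProbabilityMeasure μ]
    (hμK : ∃ K : Set G, IsCompact K ∧ μ Kᶜ = 0)
    (lam : ℝ) (hlam : lam < 1)
    (hcontr : ∀ v : E, ‖∫ g, (π g) v ∂μ‖ ≤ lam * ‖v‖)
    -- `b z` is the unique fixed point of `L_{π,z}^μ`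
    (b : cocycleSubmodule π → E)
    (hb : ∀ z : cocycleSubmodule π,
      b z = (∫ g, (π g) (b z) ∂μ) + ∫ g, (z : G → E) g ∂μ) :
    -- unique decomposition `z = d_π b(z) + (z − d_π b(z))`, coboundary plus element of `ker P`
    (∀ z : cocycleSubmodule π,
      ∃! p : E × cocycleSubmodule π,
        z = codiff π hπ_mul hπ_cont p.1 + p.2 ∧
          codiff π hπ_mul hπ_cont (b p.2) = 0) ∧
    -- `ker P` is a linear subspace of `Z¹(G,π)` ...
    (∀ w w' : cocycleSubmodule π,
      codiff π hπ_mul hπ_cont (b w) = 0 → codiff π hπ_mul hπ_cont (b w') = 0 →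
        codiff π hπ_mul hπ_cont (b (w + w')) = 0) ∧
    (∀ (c : ℝ) (w : cocycleSubmodule π),
      codiff π hπ_mul hπ_cont (b w) = 0 →
        codiff π hπ_mul hπ_cont (b (c • w)) = 0) ∧
    -- ... on which the quotient map onto `H¹(G,π) = Z¹(G,π)/B¹(G,π)` is injective ...
    (∀ w w' : cocycleSubmodule π,
      codiff π hπ_mul hπ_cont (b w) = 0 → codiff π hπ_mul hπ_cont (b w') = 0 →
        Submodule.Quotient.mk (p := LinearMap.range (codiff π hπ_mul hπ_cont)) w =
          Submodule.Quotient.mk w' → w = w') ∧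
    -- ... and surjective
    (∀ z : cocycleSubmodule π,
      ∃ w : cocycleSubmodule π,
        codiff π hπ_mul hπ_cont (b w) = 0 ∧
          Submodule.Quotient.mk (p := LinearMap.range (codiff π hπ_mul hπ_cont)) w =
            Submodule.Quotient.mk z) := by
  obtain ⟨K, hK, hμK⟩ := hμK
  have hint {f : G → E} (hf : Continuous f) : Integrable f μ :=
    hf.integrable_of_isCompact_of_measure_compl_eq_zero hK hμK
  set A := markovOperator π μ fun v => hint (hπ_cont v)
  set m := cocycleMean π μ fun _ hz => hint hz.1
  have hA : ∀ v, A v = v → v = 0 := fun v =>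
    eq_zero_of_map_eq_self_of_norm_map_le hlam (hcontr v)
  set β := IsLinearMap.mk' b (isLinearMap_of_eq_map_add hA m hb)
  set d := codiff π hπ_mul hπ_cont
  have hβd : Function.LeftInverse β d := fun v =>
    eq_of_eq_map_add_of_eq_map_add hA (hb (d v)) <| by
      change v = A v + m (d v)
      rw [cocycleMean_codiff π μ hπ_mul hπ_cont (fun v => hint (hπ_cont v)), add_sub_cancel]
  exact ⟨existsUnique_add_of_leftInverse hβd,
    fun _ _ => (LinearMap.ker (d ∘ₗ β)).add_mem, fun c _ => (LinearMap.ker (d ∘ₗ β)).smul_mem c,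
    fun _ _ => mk_injOn_ker_comp_of_leftInverse hβd, exists_mk_eq_of_leftInverse hβd⟩

/-- with `P z = d_π b(z)`, every cocycle decomposes uniquely as
`z = d_π b(z) + (z − d_π b(z))` with first summand in `B¹(G,π)` and second in `ker P`;
moreover the quotient map `Z¹(G,π) → Z¹(G,π)/B¹(G,π) = H¹(G,π)` restricts to a linear
isomorphism of `ker P` onto `H¹(G,π)` (`ker P` is a subspace, and the restriction of the
quotient map to it is injective and surjective). -/
theorem stmt_14 {G E : Type*} [Group G] [TopologicalSpace G] [IsTopologicalGroup G]
    [MeasurableSpace G] [BorelSpace G]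
    [NormedAddCommGroup E] [NormedSpace ℝ E] [CompleteSpace E]
    (π : G → E →L[ℝ] E)
    (hπ_mul : ∀ g h : G, π (g * h) = (π g).comp (π h))
    (hπ_one : π 1 = ContinuousLinearMap.id ℝ E)
    (hπ_isom : ∀ (g : G) (v : E), ‖(π g) v‖ = ‖v‖)
    (hπ_cont : ∀ v : E, Continuous fun g => (π g) v)
    (S : Set G) (hS_comp : IsCompact S) (hS_symm : ∀ s ∈ S, s⁻¹ ∈ S)
    (hS_gen : Subgroup.closure S = ⊤)
    (μ : Measure G) [IsProbabilityMeasure μ]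
    (hμK : ∃ K : Set G, IsCompact K ∧ μ Kᶜ = 0)
    (hμS : μ Sᶜ = 0)
    (lam : ℝ) (hlam : lam < 1)
    (hcontr : ∀ v : E, ‖∫ g, (π g) v ∂μ‖ ≤ lam * ‖v‖)
    -- `b z` is the unique fixed point of `L_{π,z}^μ`
    (b : cocycleSubmodule π → E)
    (hb : ∀ z : cocycleSubmodule π,
      b z = (∫ g, (π g) (b z) ∂μ) + ∫ g, (z : G → E) g ∂μ) :
    -- unique decomposition `z = d_π b(z) + (z − d_π b(z))`, coboundary plus element of `ker P`
    (∀ z : cocycleSubmodule π,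
      ∃! p : E × cocycleSubmodule π,
        z = codiff π hπ_mul hπ_cont p.1 + p.2 ∧
          codiff π hπ_mul hπ_cont (b p.2) = 0) ∧
    -- `ker P` is a linear subspace of `Z¹(G,π)` ...
    (∀ w w' : cocycleSubmodule π,
      codiff π hπ_mul hπ_cont (b w) = 0 → codiff π hπ_mul hπ_cont (b w') = 0 →
        codiff π hπ_mul hπ_cont (b (w + w')) = 0) ∧
    (∀ (c : ℝ) (w : cocycleSubmodule π),
      codiff π hπ_mul hπ_cont (b w) = 0 →
        codiff π hπ_mul hπ_cont (b (c • w)) = 0) ∧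
    -- ... on which the quotient map onto `H¹(G,π) = Z¹(G,π)/B¹(G,π)` is injective ...
    (∀ w w' : cocycleSubmodule π,
      codiff π hπ_mul hπ_cont (b w) = 0 → codiff π hπ_mul hπ_cont (b w') = 0 →
        Submodule.Quotient.mk (p := LinearMap.range (codiff π hπ_mul hπ_cont)) w =
          Submodule.Quotient.mk w' → w = w') ∧
    -- ... and surjective
    (∀ z : cocycleSubmodule π,
      ∃ w : cocycleSubmodule π,
        codiff π hπ_mul hπ_cont (b w) = 0 ∧
          Submodule.Quotient.mk (p := LinearMap.range (codiff π hπ_mul hπ_cont)) w =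
            Submodule.Quotient.mk z) :=
  stmt_14_general π hπ_mul hπ_cont μ hμK lam hlam hcontr b hb
end
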